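/- Let X, Y be finite-dimensional Euclidean spaces, f, g ∈ Γ₀(X) with f differentiable and ∇f (1/β)-cocoercive, h ∈ Γ₀(Y), D : X → Y linear, and σ, τ > 0 with 1/τ − σ‖D‖² > β/2. On Z = X × Y define the positive definite operator P(x, y) = ((1/τ)x + D*y, Dx + (1/σ)y) and the inner product ⟨z, z′⟩_P = ⟨z, Pz′⟩, and let A(x, y) = (∂g(x) + D*y, −Dx + ∂h*(y)) and B(x, y) = (∇f(x), 0). Then: (1) the point z̃^{k+1} = (x̃^{k+1}, ỹ^{k+1}) produced by one step of the primal-dual iteration ỹ^{k+1} = prox_{σh*}(y^k + σDx^k), x̃^{k+1} = prox_{τg}(x^k − τ∇f(x^k) − τD*(2ỹ^{k+1} − y^k)) satisfies z̃^{k+1} = (I + P⁻¹A)⁻¹(I − P⁻¹B)(z^k); (2) T₁ = (I + P⁻¹A)⁻¹ is (1/2)-averaged on (Z, ⟨·,·⟩_P), T₂ = I − P⁻¹B is (1/(2κ))-averaged on (Z, ⟨·,·⟩_P) with κ = (1/τ − σ‖D‖²)/β, and T = T₁ ∘ T₂ is (1/δ)-averaged with δ = 2 − 1/(2κ). -/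

import Mathlib

/-!
(1) is the optimality condition of the two prox steps, `t⁻¹ (u - p) ∈ ∂g p` for
`p = prox_{t g} u`, rearranged through the cross terms of `P`.

For (2) all averagedness estimates are taken in the bilinear form `⟪z, P z'⟫`, which is
positive semidefinite because `σ τ ‖D‖² ≤ 1`. The operator `A` is monotone: its skew part
`(D* y, -D x)` cancels, and subdifferentials of proper functions are monotone (`h*` is proper
because `h` has an affine minorant, by separation from its closed convex epigraph). Hence the
resolvent `T₁` is firmly nonexpansive. The operator `P⁻¹B` is `κ`-cocoercive in the `P`-form,
since `P⁻¹B z` lies in `P⁻¹ (X × {0})`, where `(1/τ - σ‖D‖²) ‖d‖²_P ≤ ‖P d‖²`. The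
composition rule `α = (α₁ + α₂ - 2 α₁ α₂) / (1 - α₁ α₂)` gives `1 / (2 - α₂)` for `α₁ = 1/2`.
-/

open Filter Topology Set
open scoped InnerProductSpace RealInnerProductSpace Pointwise

noncomputable section

/-- The inertial parameter condition on the extrapolation parameters `αs` and the
relaxation parameters `ρs`. -/
def InertialCond (αs ρs : ℕ → ℝ) : Prop :=
  ∃ α ρ θ δ : ℝ,
    Monotone αs ∧ αs 1 = 0 ∧ (∀ k, 1 ≤ k → 0 ≤ αs k ∧ αs k ≤ α) ∧ 0 ≤ α ∧ α < 1 ∧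
    0 < ρ ∧ 0 < θ ∧ 0 < δ ∧
    (α ^ 2 * (1 + α) + α * θ) / (1 - α ^ 2) < δ ∧
    (∀ k, 1 ≤ k → ρ ≤ ρs k ∧
      ρs k < (δ - α * (α * (1 + α) + α * δ + θ)) / (δ * (1 + α * (1 + α) + α * δ + θ)))

variable {H : Type*} [NormedAddCommGroup H] [InnerProductSpace ℝ H]

/-- `g` is a proper, lower semicontinuous, convex function with values in `(-∞, +∞]`. -/
def Gamma0 (g : H → EReal) : Prop :=
  (∃ x, g x ≠ ⊤) ∧ (∀ x, g x ≠ ⊥) ∧ LowerSemicontinuous g ∧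
  ∀ x y : H, ∀ a b : ℝ, 0 ≤ a → 0 ≤ b → a + b = 1 →
    g (a • x + b • y) ≤ (a : EReal) * g x + (b : EReal) * g y

/-- The Legendre–Fenchel conjugate of `h`. -/
def fenchel (h : H → EReal) (y : H) : EReal :=
  ⨆ x : H, ((⟪y, x⟫_ℝ : ℝ) : EReal) - h x

/-- `p = prox_{τ g}(u)`, i.e. `p` minimizes `w ↦ g w + ‖u - w‖² / (2τ)`. -/
def IsProx (g : H → EReal) (τ : ℝ) (u p : H) : Prop :=
  ∀ w, g p + ((1 / (2 * τ) * ‖u - p‖ ^ 2 : ℝ) : EReal) ≤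
    g w + ((1 / (2 * τ) * ‖u - w‖ ^ 2 : ℝ) : EReal)

/-- `p = prox_{S g}(u)` for a positive definite map `S` with inverse `Sinv`, i.e. `p`
minimizes `w ↦ g w + (1/2) ⟪S⁻¹ (u - w), u - w⟫`. -/
def IsProxOp (g : H → EReal) (Sinv : H →L[ℝ] H) (u p : H) : Prop :=
  ∀ w, g p + ((1 / 2 * ⟪Sinv (u - p), u - p⟫_ℝ : ℝ) : EReal) ≤
    g w + ((1 / 2 * ⟪Sinv (u - w), u - w⟫_ℝ : ℝ) : EReal)

/-- `B` is cocoercive with respect to `Linv = L⁻¹`. -/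
def CocoerciveWrt (B : H → H) (Linv : H →L[ℝ] H) : Prop :=
  ∀ x y : H, ⟪Linv (B x - B y), B x - B y⟫_ℝ ≤ ⟪B x - B y, x - y⟫_ℝ

/-- `L` is a selfadjoint positive definite (bounded linear) map. -/
def PosDefSA (L : H →L[ℝ] H) : Prop :=
  (∀ x y : H, ⟪L x, y⟫_ℝ = ⟪x, L y⟫_ℝ) ∧ ∀ x : H, x ≠ 0 → 0 < ⟪L x, x⟫_ℝ

/-- `Linv` is a two-sided inverse of `L`. -/
def InvPair (L Linv : H →L[ℝ] H) : Prop :=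
  (∀ x, L (Linv x) = x) ∧ (∀ x, Linv (L x) = x)

/-- The subdifferential of an extended-real-valued convex function. -/
def subdiff (g : H → EReal) (x : H) : Set H :=
  {u | ∀ z, g x + ((⟪u, z - x⟫_ℝ : ℝ) : EReal) ≤ g z}

/-- The diagonal operator on `EuclideanSpace ℝ (Fin q)` with diagonal entries `t`. -/
def diagOp {q : ℕ} (t : Fin q → ℝ) :
    EuclideanSpace ℝ (Fin q) →L[ℝ] EuclideanSpace ℝ (Fin q) :=
  LinearMap.toContinuousLinearMap
  { toFun := fun x => (WithLp.toLp 2 (fun i => t i * x i) : EuclideanSpace ℝ (Fin q))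
    map_add' := by intro x y; ext i; simp [mul_add]
    map_smul' := by intro c x; ext i; simp [smul_eq_mul] <;> ring }

end
/-- `T` is `a`-averaged with respect to the (semi-)inner product `z, w ↦ ip z (P w)`. -/
def AveragedWrt {Z : Type*} [AddCommGroup Z] (ip : Z → Z → ℝ) (P : Z → Z) (a : ℝ)
    (T : Z → Z) : Prop :=
  ∀ z w : Z, ip (T z - T w) (P (T z - T w)) ≤
    ip (z - w) (P (z - w)) -
      ((1 - a) / a) * ip ((z - T z) - (w - T w)) (P ((z - T z) - (w - T w)))

section ConvexAnalysis

variable {H : Type*} [NormedAddCommGroup H] [InnerProductSpace ℝ H]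

def ERealConvex (g : H → EReal) : Prop :=
  ∀ x y : H, ∀ a b : ℝ, 0 ≤ a → 0 ≤ b → a + b = 1 →
    g (a • x + b • y) ≤ (a : EReal) * g x + (b : EReal) * g y

theorem ne_top_of_mem_subdiff {g : H → EReal} (hproper : ∃ x, g x ≠ ⊤) {x u : H}
    (hu : u ∈ subdiff g x) : g x ≠ ⊤ := by
  obtain ⟨z, hz⟩ := hproper
  intro hx
  have := hu z
  rw [hx, EReal.top_add_of_ne_bot (EReal.coe_ne_bot _), top_le_iff] at this
  exact hz this

theorem subdiff_monotone {g : H → EReal} (hproper : ∃ x, g x ≠ ⊤) (hbot : ∀ x, g x ≠ ⊥)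
    {x y u v : H} (hu : u ∈ subdiff g x) (hv : v ∈ subdiff g y) :
    0 ≤ ⟪u - v, x - y⟫_ℝ := by
  have hx := EReal.coe_toReal (ne_top_of_mem_subdiff hproper hu) (hbot x)
  have hy := EReal.coe_toReal (ne_top_of_mem_subdiff hproper hv) (hbot y)
  have huy := hu y
  have hvx := hv x
  rw [← hx, ← hy] at huy hvx
  norm_cast at huy hvx
  have hyx : y - x = -(x - y) := (neg_sub x y).symm
  rw [hyx, inner_neg_right] at huy
  rw [inner_sub_left]
  linarith

theorem IsProx.smul_sub_mem_subdiff {g : H → EReal} {t : ℝ} {u p : H} (hp : IsProx g t u p)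
    (hbot : ∀ x, g x ≠ ⊥) (hconv : ERealConvex g) (ht : 0 < t) :
    t⁻¹ • (u - p) ∈ subdiff g p := by
  intro z
  by_cases hz : g z = ⊤
  · simp [hz]
  obtain ⟨s, hs⟩ : ∃ s : ℝ, g z = s := ⟨_, (EReal.coe_toReal hz (hbot z)).symm⟩
  have hpz := hp z
  have hp_top : g p ≠ ⊤ := by
    intro h
    rw [h, hs, EReal.top_add_of_ne_bot (EReal.coe_ne_bot _), top_le_iff] at hpz
    exact EReal.coe_ne_top _ hpz
  obtain ⟨r, hr⟩ : ∃ r : ℝ, g p = r := ⟨_, (EReal.coe_toReal hp_top (hbot p)).symm⟩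
  rw [hr, hs, real_inner_smul_left]
  norm_cast
  set C := ‖z - p‖ ^ 2 / (2 * t)
  -- optimality of `p` against `p + θ (z - p)`, then `θ → 0`
  have hsegment : ∀ θ ∈ Ioc (0 : ℝ) 1, r + t⁻¹ * ⟪u - p, z - p⟫_ℝ ≤ s + θ * C := by
    rintro θ ⟨hθ, hθ1⟩
    have hw : (1 - θ) • p + θ • z = p + θ • (z - p) := by module
    have hcv := hconv p z (1 - θ) θ (by linarith) hθ.le (by ring)
    have hpw := hp ((1 - θ) • p + θ • z)
    rw [hw] at hcv hpw
    rw [hr, hs] at hcv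
    rw [hr] at hpw
    have hle := hpw.trans (add_le_add hcv le_rfl)
    norm_cast at hle
    have hnorm : ‖u - (p + θ • (z - p))‖ ^ 2 =
        ‖u - p‖ ^ 2 - 2 * θ * ⟪u - p, z - p⟫_ℝ + θ ^ 2 * ‖z - p‖ ^ 2 := by
      rw [show u - (p + θ • (z - p)) = (u - p) - θ • (z - p) by abel, norm_sub_sq_real,
        real_inner_smul_right, norm_smul, Real.norm_of_nonneg hθ.le]
      ring
    rw [hnorm] at hle
    have key : θ * (r + t⁻¹ * ⟪u - p, z - p⟫_ℝ) ≤ θ * (s + θ * C) := by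
      have : θ * (r + t⁻¹ * ⟪u - p, z - p⟫_ℝ) - θ * (s + θ * C) =
          r + 1 / (2 * t) * ‖u - p‖ ^ 2 - ((1 - θ) * r + θ * s +
            1 / (2 * t) * (‖u - p‖ ^ 2 - 2 * θ * ⟪u - p, z - p⟫_ℝ + θ ^ 2 * ‖z - p‖ ^ 2)) := by
        simp only [C]; field_simp; ring
      linarith
    exact le_of_mul_le_mul_left key hθ
  have hlim : Tendsto (fun θ : ℝ => s + θ * C) (𝓝[>] 0) (𝓝 s) := by
    have : Continuous (fun θ : ℝ => s + θ * C) := by fun_prop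
    simpa using (this.tendsto 0).mono_left nhdsWithin_le_nhds
  exact ge_of_tendsto hlim (eventually_of_mem (Ioc_mem_nhdsGT one_pos) hsegment)

theorem fenchel_ne_bot {h : H → EReal} (hproper : ∃ x, h x ≠ ⊤) (y : H) : fenchel h y ≠ ⊥ := by
  obtain ⟨x, hx⟩ := hproper
  refine ne_bot_of_le_ne_bot ?_ (le_iSup (fun x => ((⟪y, x⟫_ℝ : ℝ) : EReal) - h x) x)
  rw [sub_eq_add_neg, Ne, EReal.add_eq_bot_iff, EReal.neg_eq_bot_iff]
  exact not_or.mpr ⟨EReal.coe_ne_bot _, hx⟩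

end ConvexAnalysis

section Conjugate

theorem LowerSemicontinuous.isClosed_real_epigraph {E : Type*} [TopologicalSpace E]
    {h : E → EReal} (hlsc : LowerSemicontinuous h) :
    IsClosed {p : E × ℝ | h p.1 ≤ p.2} :=
  hlsc.isClosed_epigraph.preimage
    (continuous_fst.prodMk (continuous_coe_real_ereal.comp continuous_snd))

variable {H : Type*} [NormedAddCommGroup H] [InnerProductSpace ℝ H]

theorem fenchel_erealConvex {h : H → EReal} (hbot : ∀ x, h x ≠ ⊥) : ERealConvex (fenchel h) := by
  intro y₁ y₂ a b ha hb hab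
  refine iSup_le fun x => ?_
  by_cases hx : h x = ⊤
  · simp [hx]
  obtain ⟨m, hm⟩ : ∃ m : ℝ, h x = m := ⟨_, (EReal.coe_toReal hx (hbot x)).symm⟩
  have h₁ := le_iSup (fun x => ((⟪y₁, x⟫_ℝ : ℝ) : EReal) - h x) x
  have h₂ := le_iSup (fun x => ((⟪y₂, x⟫_ℝ : ℝ) : EReal) - h x) x
  simp only [hm, ← EReal.coe_sub] at h₁ h₂ ⊢
  have hsplit : ((⟪a • y₁ + b • y₂, x⟫_ℝ - m : ℝ) : EReal) =
      (a : EReal) * ((⟪y₁, x⟫_ℝ - m : ℝ) : EReal) +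
        (b : EReal) * ((⟪y₂, x⟫_ℝ - m : ℝ) : EReal) := by
    norm_cast
    rw [inner_add_left, real_inner_smul_left, real_inner_smul_left]
    linear_combination m * hab
  rw [hsplit]
  exact add_le_add (mul_le_mul_of_nonneg_left h₁ (by exact_mod_cast ha))
    (mul_le_mul_of_nonneg_left h₂ (by exact_mod_cast hb))

theorem ERealConvex.convex_real_epigraph {h : H → EReal} (hconv : ERealConvex h) :
    Convex ℝ {p : H × ℝ | h p.1 ≤ p.2} := by
  rintro ⟨x, r⟩ (hxr : h x ≤ r) ⟨y, s⟩ (hys : h y ≤ s) a b ha hb hab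
  show h (a • x + b • y) ≤ ((a * r + b * s : ℝ) : EReal)
  calc h (a • x + b • y) ≤ (a : EReal) * h x + (b : EReal) * h y := hconv x y a b ha hb hab
    _ ≤ (a : EReal) * r + (b : EReal) * s :=
      add_le_add (mul_le_mul_of_nonneg_left hxr (by exact_mod_cast ha))
        (mul_le_mul_of_nonneg_left hys (by exact_mod_cast hb))
    _ = ((a * r + b * s : ℝ) : EReal) := by norm_cast

/-- Separate a point lying below the epigraph from it. -/
theorem Gamma0.exists_inner_add_le [CompleteSpace H] {h : H → EReal} (hh : Gamma0 h) :
    ∃ (ξ : H) (c : ℝ), ∀ x, ((⟪ξ, x⟫_ℝ + c : ℝ) : EReal) ≤ h x := by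
  obtain ⟨⟨x₀, hx₀⟩, hbot, hlsc, hconv⟩ := hh
  obtain ⟨r₀, hr₀⟩ : ∃ r : ℝ, h x₀ = r := ⟨_, (EReal.coe_toReal hx₀ (hbot x₀)).symm⟩
  have hbelow : (x₀, r₀ - 1) ∉ {p : H × ℝ | h p.1 ≤ p.2} := by
    simp only [mem_ofPred_eq, hr₀, not_le, EReal.coe_lt_coe_iff]; linarith
  obtain ⟨F, u, hF, hFu⟩ :=
    geometric_hahn_banach_closed_point (ERealConvex.convex_real_epigraph hconv)
      hlsc.isClosed_real_epigraph hbelow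
  have hFsplit : ∀ (x : H) (r : ℝ), F (x, r) = F (x, 0) + r * F (0, 1) := by
    intro x r
    rw [show ((x, r) : H × ℝ) = (x, 0) + r • ((0 : H), (1 : ℝ)) by simp, map_add, map_smul,
      smul_eq_mul]
  set s := F (0, 1)
  have hs : s < 0 := by
    have := hF (x₀, r₀) (by simp [hr₀])
    rw [hFsplit] at this hFu
    linarith
  set ξ := (InnerProductSpace.toDual ℝ H).symm (F.comp (ContinuousLinearMap.inl ℝ H ℝ))
  refine ⟨(-s⁻¹) • ξ, u / s, fun x => ?_⟩
  by_cases hx : h x = ⊤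
  · simp [hx]
  obtain ⟨m, hm⟩ : ∃ m : ℝ, h x = m := ⟨_, (EReal.coe_toReal hx (hbot x)).symm⟩
  have hFx := hF (x, m) (by simp [hm])
  rw [hFsplit] at hFx
  rw [hm, EReal.coe_le_coe_iff, real_inner_smul_left, InnerProductSpace.toDual_symm_apply]
  simp only [ContinuousLinearMap.comp_apply, ContinuousLinearMap.inl_apply]
  rw [neg_mul, ← div_eq_inv_mul, ← sub_eq_neg_add, ← sub_div, div_le_iff_of_neg hs]
  linarith

theorem fenchel_le_neg_of_inner_add_le {h : H → EReal} {ξ : H} {c : ℝ}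
    (hξ : ∀ x, ((⟪ξ, x⟫_ℝ + c : ℝ) : EReal) ≤ h x) : fenchel h ξ ≤ ((-c : ℝ) : EReal) := by
  refine iSup_le fun x => ?_
  rw [EReal.sub_le_iff_le_add (Or.inr (EReal.coe_ne_top _)) (Or.inr (EReal.coe_ne_bot _))]
  calc ((⟪ξ, x⟫_ℝ : ℝ) : EReal) = ((-c : ℝ) : EReal) + ((⟪ξ, x⟫_ℝ + c : ℝ) : EReal) := by
        norm_cast; ring
    _ ≤ ((-c : ℝ) : EReal) + h x := add_le_add le_rfl (hξ x)

theorem Gamma0.exists_fenchel_ne_top [CompleteSpace H] {h : H → EReal} (hh : Gamma0 h) :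
    ∃ y, fenchel h y ≠ ⊤ := by
  obtain ⟨ξ, c, hξ⟩ := hh.exists_inner_add_le
  exact ⟨ξ, ne_top_of_le_ne_top (EReal.coe_ne_top _) (fenchel_le_neg_of_inner_add_le hξ)⟩

end Conjugate

section Averaged

variable {Z : Type*} [AddCommGroup Z] [Module ℝ Z] {Q : LinearMap.BilinForm ℝ Z}

theorem LinearMap.BilinForm.IsSymm.apply_add_self (hQ : Q.IsSymm) (a b : Z) :
    Q (a + b) (a + b) = Q a a + 2 * Q a b + Q b b := by
  simp only [map_add, LinearMap.add_apply, hQ.eq b a]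
  ring

theorem LinearMap.BilinForm.IsSymm.apply_sub_self (hQ : Q.IsSymm) (a b : Z) :
    Q (a - b) (a - b) = Q a a - 2 * Q a b + Q b b := by
  simp only [map_sub, LinearMap.sub_apply, hQ.eq b a]
  ring

/-- The identity `(s + t) (t Q(a) + s Q(b)) - s t Q(a + b) = Q(t a - s b)`. -/
theorem LinearMap.BilinForm.IsSymm.mul_apply_add_self_le (hQ : Q.IsSymm)
    (hpos : ∀ z, 0 ≤ Q z z) {s t : ℝ} (hst : 0 < s + t) (a b : Z) :
    s * t / (s + t) * Q (a + b) (a + b) ≤ t * Q a a + s * Q b b := by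
  have key : (s + t) * (t * Q a a + s * Q b b) - s * t * Q (a + b) (a + b) =
      Q (t • a - s • b) (t • a - s • b) := by
    rw [hQ.apply_add_self, hQ.apply_sub_self]
    simp only [map_smul, LinearMap.smul_apply, smul_eq_mul]
    ring
  rw [div_mul_eq_mul_div, div_le_iff₀ hst]
  linarith [hpos (t • a - s • b)]

variable {ip : Z → Z → ℝ} {P : Z → Z}

theorem averagedWrt_half_of_nonneg (hQ : ∀ u v, ip u (P v) = Q u v) (hsymm : Q.IsSymm)
    {T : Z → Z} (hT : ∀ z w, 0 ≤ Q (T z - T w) ((z - T z) - (w - T w))) :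
    AveragedWrt ip P (1 / 2) T := by
  intro z w
  simp only [hQ]
  have hsplit := hsymm.apply_add_self (T z - T w) ((z - T z) - (w - T w))
  rw [show T z - T w + (z - T z - (w - T w)) = z - w by abel] at hsplit
  rw [show ((1 : ℝ) - 1 / 2) / (1 / 2) = 1 by norm_num, one_mul]
  linarith [hT z w]

/-- `hT` says that `T = (I + P⁻¹ A)⁻¹`. -/
theorem averagedWrt_half_of_resolvent (hQ : ∀ u v, ip u (P v) = Q u v) (hsymm : Q.IsSymm)
    (hP : ∀ a b, P (a - b) = P a - P b) {A : Z → Set Z}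
    (hA : ∀ z w a b, a ∈ A z → b ∈ A w → 0 ≤ ip (z - w) (a - b))
    {T : Z → Z} (hT : ∀ w, P w - P (T w) ∈ A (T w)) :
    AveragedWrt ip P (1 / 2) T := by
  refine averagedWrt_half_of_nonneg hQ hsymm fun z w => ?_
  rw [← hQ, hP, hP, hP]
  exact hA _ _ _ _ (hT z) (hT w)

theorem averagedWrt_sub_of_cocoercive (hQ : ∀ u v, ip u (P v) = Q u v) (hsymm : Q.IsSymm)
    {G : Z → Z} {κ : ℝ} (hκ : κ ≠ 0)
    (hG : ∀ z w, κ * Q (G z - G w) (G z - G w) ≤ Q (z - w) (G z - G w)) :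
    AveragedWrt ip P (1 / (2 * κ)) (fun z => z - G z) := by
  intro z w
  simp only [hQ]
  rw [show z - (z - G z) - (w - (w - G w)) = G z - G w by abel,
    show z - G z - (w - G w) = (z - w) - (G z - G w) by abel, hsymm.apply_sub_self,
    show (1 - 1 / (2 * κ)) / (1 / (2 * κ)) = 2 * κ - 1 by field_simp]
  linarith [hG z w]

theorem AveragedWrt.comp (hQ : ∀ u v, ip u (P v) = Q u v) (hsymm : Q.IsSymm)
    (hpos : ∀ z, 0 ≤ Q z z) {α₁ α₂ : ℝ} {T₁ T₂ : Z → Z}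
    (h₁ : AveragedWrt ip P α₁ T₁) (h₂ : AveragedWrt ip P α₂ T₂)
    (hα₁ : 0 < α₁) (hα₁' : α₁ < 1) (hα₂ : 0 < α₂) (hα₂' : α₂ < 1) :
    AveragedWrt ip P ((α₁ + α₂ - 2 * α₁ * α₂) / (1 - α₁ * α₂)) (T₁ ∘ T₂) := by
  intro z w
  have e₁ := h₁ (T₂ z) (T₂ w)
  have e₂ := h₂ z w
  simp only [hQ, Function.comp_apply] at e₁ e₂ ⊢
  set s := (1 - α₁) / α₁
  set t := (1 - α₂) / α₂
  have hs : 0 < s := div_pos (by linarith) hα₁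
  have ht : 0 < t := div_pos (by linarith) hα₂
  have hcoef : (1 - (α₁ + α₂ - 2 * α₁ * α₂) / (1 - α₁ * α₂)) /
      ((α₁ + α₂ - 2 * α₁ * α₂) / (1 - α₁ * α₂)) = s * t / (s + t) := by
    have hnum : 0 < α₁ + α₂ - 2 * α₁ * α₂ := by nlinarith
    have hden : 0 < 1 - α₁ * α₂ := by nlinarith
    simp only [s, t]
    field_simp
    ring
  have hsplit : z - T₁ (T₂ z) - (w - T₁ (T₂ w)) =
      (z - T₂ z - (w - T₂ w)) + (T₂ z - T₁ (T₂ z) - (T₂ w - T₁ (T₂ w))) := by abel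
  rw [hcoef, hsplit]
  linarith [hsymm.mul_apply_add_self_le hpos (add_pos hs ht) (z - T₂ z - (w - T₂ w))
    (T₂ z - T₁ (T₂ z) - (T₂ w - T₁ (T₂ w)))]

end Averaged

section PrimalDual

variable {X Y : Type*} [NormedAddCommGroup X] [InnerProductSpace ℝ X]
  [NormedAddCommGroup Y] [InnerProductSpace ℝ Y]

/-- The bilinear form `⟪z, P z'⟫` of the preconditioner
`P (x, y) = (τ⁻¹ x + D* y, D x + σ⁻¹ y)`, written without the adjoint. -/
noncomputable def primalDualForm (D : X →L[ℝ] Y) (σ τ : ℝ) : LinearMap.BilinForm ℝ (X × Y) :=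
  LinearMap.mk₂ ℝ (fun u v => τ⁻¹ * ⟪u.1, v.1⟫_ℝ + ⟪D u.1, v.2⟫_ℝ + ⟪D v.1, u.2⟫_ℝ +
      σ⁻¹ * ⟪u.2, v.2⟫_ℝ)
    (fun u u' v => by simp only [Prod.fst_add, Prod.snd_add, map_add, inner_add_left,
      inner_add_right]; ring)
    (fun c u v => by simp only [Prod.smul_fst, Prod.smul_snd, map_smul, real_inner_smul_left,
      real_inner_smul_right, smul_eq_mul]; ring)
    (fun u v v' => by simp only [Prod.fst_add, Prod.snd_add, map_add, inner_add_left,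
      inner_add_right]; ring)
    (fun c u v => by simp only [Prod.smul_fst, Prod.smul_snd, map_smul, real_inner_smul_left,
      real_inner_smul_right, smul_eq_mul]; ring)

variable {D : X →L[ℝ] Y} {σ τ : ℝ}

theorem primalDualForm_apply (u v : X × Y) : primalDualForm D σ τ u v =
    τ⁻¹ * ⟪u.1, v.1⟫_ℝ + ⟪D u.1, v.2⟫_ℝ + ⟪D v.1, u.2⟫_ℝ + σ⁻¹ * ⟪u.2, v.2⟫_ℝ :=
  rfl

theorem primalDualForm_isSymm : (primalDualForm D σ τ).IsSymm :=
  ⟨fun u v => by simp only [primalDualForm_apply, real_inner_comm]; ring⟩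

theorem primalDualForm_nonneg (hσ : 0 < σ) (hD : σ * ‖D‖ ^ 2 ≤ 1 / τ) (u : X × Y) :
    0 ≤ primalDualForm D σ τ u u := by
  have hcross : -(‖D‖ * ‖u.1‖ * ‖u.2‖) ≤ ⟪D u.1, u.2⟫_ℝ := by
    have h₁ := abs_real_inner_le_norm (D u.1) u.2
    have h₂ := mul_le_mul_of_nonneg_right (D.le_opNorm u.1) (norm_nonneg u.2)
    linarith [neg_abs_le ⟪D u.1, u.2⟫_ℝ]
  rw [one_div] at hD
  have hD' := mul_le_mul_of_nonneg_right (mul_le_mul_of_nonneg_left hD hσ.le) (sq_nonneg ‖u.1‖)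
  rw [primalDualForm_apply, real_inner_self_eq_norm_sq, real_inner_self_eq_norm_sq]
  -- multiplied by `σ`, the form dominates `(σ ‖D‖ ‖x‖ - ‖y‖)²`
  have key : 0 ≤ σ * (τ⁻¹ * ‖u.1‖ ^ 2 + 2 * ⟪D u.1, u.2⟫_ℝ + σ⁻¹ * ‖u.2‖ ^ 2) := by
    have hσσ : σ * σ⁻¹ = 1 := mul_inv_cancel₀ hσ.ne'
    nlinarith [sq_nonneg (σ * ‖D‖ * ‖u.1‖ - ‖u.2‖)]
  linarith [(mul_nonneg_iff_of_pos_left hσ).mp key]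

end PrimalDual

section Preconditioned

variable {X Y : Type*} [NormedAddCommGroup X] [InnerProductSpace ℝ X] [CompleteSpace X]
  [NormedAddCommGroup Y] [InnerProductSpace ℝ Y] [CompleteSpace Y] {D : X →L[ℝ] Y} {σ τ : ℝ}

theorem primalDualForm_eq_inner (u v : X × Y) : primalDualForm D σ τ u v =
    ⟪u.1, τ⁻¹ • v.1 + (ContinuousLinearMap.adjoint D) v.2⟫_ℝ + ⟪u.2, D v.1 + σ⁻¹ • v.2⟫_ℝ := by
  rw [primalDualForm_apply, inner_add_right, inner_add_right, real_inner_smul_right,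
    real_inner_smul_right, ContinuousLinearMap.adjoint_inner_right, real_inner_comm u.2]
  ring

variable {P : X × Y → X × Y}

theorem preconditioner_sub (hP : ∀ z : X × Y, P z =
      (τ⁻¹ • z.1 + (ContinuousLinearMap.adjoint D) z.2, D z.1 + σ⁻¹ • z.2))
    (a b : X × Y) : P (a - b) = P a - P b := by
  simp only [hP, Prod.fst_sub, Prod.snd_sub, map_sub, smul_sub, Prod.mk_sub_mk]
  congr 1 <;> abel

/-- `h₁` and `h₂` say that `P d = (b, 0)`. -/
theorem mul_primalDualForm_le (hσ : 0 < σ) (hm : 0 ≤ 1 / τ - σ * ‖D‖ ^ 2) {d : X × Y} {b : X}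
    (h₁ : τ⁻¹ • d.1 + (ContinuousLinearMap.adjoint D) d.2 = b) (h₂ : D d.1 + σ⁻¹ • d.2 = 0) :
    (1 / τ - σ * ‖D‖ ^ 2) * primalDualForm D σ τ d d ≤ ‖b‖ ^ 2 := by
  have hd₂ : d.2 = -(σ • D d.1) := by
    have h : σ • (D d.1 + σ⁻¹ • d.2) = 0 := by rw [h₂, smul_zero]
    rw [smul_add, smul_smul, mul_inv_cancel₀ hσ.ne', one_smul] at h
    rw [eq_neg_iff_add_eq_zero, add_comm, h]
  have hform : primalDualForm D σ τ d d = ⟪d.1, b⟫_ℝ := by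
    rw [primalDualForm_eq_inner, h₁, h₂, inner_zero_right, add_zero]
  have hlower : (1 / τ - σ * ‖D‖ ^ 2) * ‖d.1‖ ^ 2 ≤ ⟪d.1, b⟫_ℝ := by
    have hDd : ‖D d.1‖ ^ 2 ≤ (‖D‖ * ‖d.1‖) ^ 2 := pow_le_pow_left₀ (norm_nonneg _) (D.le_opNorm _) 2
    rw [← h₁, inner_add_right, real_inner_smul_right, ContinuousLinearMap.adjoint_inner_right, hd₂,
      inner_neg_right, real_inner_smul_right, real_inner_self_eq_norm_sq,
      real_inner_self_eq_norm_sq, one_div]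
    nlinarith [mul_le_mul_of_nonneg_left hDd hσ.le]
  have hupper := real_inner_le_norm d.1 b
  rw [hform]
  nlinarith [sq_nonneg (‖b‖ - (1 / τ - σ * ‖D‖ ^ 2) * ‖d.1‖), norm_nonneg b, norm_nonneg d.1,
    mul_le_mul_of_nonneg_left (hlower.trans hupper) hm]

theorem primalDualForm_cocoercive {Pinv B : X × Y → X × Y} {F : X → X} {β : ℝ}
    (hσ : 0 < σ) (hβ : 0 < β) (hm : 0 ≤ 1 / τ - σ * ‖D‖ ^ 2)
    (hP : ∀ z : X × Y, P z =
      (τ⁻¹ • z.1 + (ContinuousLinearMap.adjoint D) z.2, D z.1 + σ⁻¹ • z.2))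
    (hPinv : ∀ z, P (Pinv z) = z) (hB : ∀ z : X × Y, B z = (F z.1, 0))
    (hF : ∀ x x' : X, (1 / β) * ‖F x - F x'‖ ^ 2 ≤ ⟪F x - F x', x - x'⟫_ℝ) (z w : X × Y) :
    (1 / τ - σ * ‖D‖ ^ 2) / β *
        primalDualForm D σ τ (Pinv (B z) - Pinv (B w)) (Pinv (B z) - Pinv (B w)) ≤
      primalDualForm D σ τ (z - w) (Pinv (B z) - Pinv (B w)) := by
  set d := Pinv (B z) - Pinv (B w)
  have hPd : P d = (F z.1 - F w.1, 0) := by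
    rw [preconditioner_sub hP, hPinv, hPinv, hB, hB, Prod.mk_sub_mk, sub_self]
  rw [hP, Prod.mk.injEq] at hPd
  have hzw : primalDualForm D σ τ (z - w) d = ⟪F z.1 - F w.1, z.1 - w.1⟫_ℝ := by
    rw [primalDualForm_eq_inner, hPd.1, hPd.2, inner_zero_right, add_zero, real_inner_comm,
      Prod.fst_sub]
  have hd := mul_primalDualForm_le hσ hm hPd.1 hPd.2
  have hFzw := hF z.1 w.1
  rw [one_div, inv_mul_le_iff₀ hβ] at hFzw
  rw [hzw, div_mul_eq_mul_div, div_le_iff₀ hβ]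
  linarith

end Preconditioned

section PrimalDualOperator

variable {X Y : Type*} [NormedAddCommGroup X] [InnerProductSpace ℝ X] [CompleteSpace X]
  [NormedAddCommGroup Y] [InnerProductSpace ℝ Y] [CompleteSpace Y] {D : X →L[ℝ] Y}
  {g : X → EReal} {φ : Y → EReal} {A : X × Y → Set (X × Y)}

/-- The skew part `(x, y) ↦ (D* y, -D x)` of `A` contributes nothing to its monotonicity. -/
theorem primalDualOperator_monotone (hg_proper : ∃ x, g x ≠ ⊤) (hg_bot : ∀ x, g x ≠ ⊥)
    (hφ_proper : ∃ y, φ y ≠ ⊤) (hφ_bot : ∀ y, φ y ≠ ⊥) {ip : X × Y → X × Y → ℝ}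
    (hip : ∀ z w : X × Y, ip z w = ⟪z.1, w.1⟫_ℝ + ⟪z.2, w.2⟫_ℝ)
    (hA : ∀ z : X × Y, A z = {w | ∃ u ∈ subdiff g z.1, ∃ v ∈ subdiff φ z.2,
      w = (u + (ContinuousLinearMap.adjoint D) z.2, v - D z.1)})
    (z w a b : X × Y) (ha : a ∈ A z) (hb : b ∈ A w) : 0 ≤ ip (z - w) (a - b) := by
  rw [hA] at ha hb
  obtain ⟨u, hu, v, hv, rfl⟩ := ha
  obtain ⟨u', hu', v', hv', rfl⟩ := hb
  have hgmono := subdiff_monotone hg_proper hg_bot hu hu'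
  have hφmono := subdiff_monotone hφ_proper hφ_bot hv hv'
  simp only [hip, Prod.mk_sub_mk, Prod.fst_sub, Prod.snd_sub]
  rw [show u + (ContinuousLinearMap.adjoint D) z.2 - (u' + (ContinuousLinearMap.adjoint D) w.2) =
      (u - u') + (ContinuousLinearMap.adjoint D) (z.2 - w.2) by rw [map_sub]; abel,
    show v - D z.1 - (v' - D w.1) = (v - v') - D (z.1 - w.1) by rw [map_sub]; abel,
    inner_add_right, inner_sub_right (z.2 - w.2), ContinuousLinearMap.adjoint_inner_right,
    real_inner_comm (D (z.1 - w.1))]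
  rw [real_inner_comm] at hgmono hφmono
  linarith

theorem primalDual_step_mem (hg_bot : ∀ x, g x ≠ ⊥) (hg_conv : ERealConvex g)
    (hφ_bot : ∀ y, φ y ≠ ⊥) (hφ_conv : ERealConvex φ) {σ τ : ℝ} (hσ : 0 < σ) (hτ : 0 < τ)
    {P B : X × Y → X × Y} {F : X → X}
    (hP : ∀ z : X × Y, P z =
      (τ⁻¹ • z.1 + (ContinuousLinearMap.adjoint D) z.2, D z.1 + σ⁻¹ • z.2))
    (hB : ∀ z : X × Y, B z = (F z.1, 0))
    (hA : ∀ z : X × Y, A z = {w | ∃ u ∈ subdiff g z.1, ∃ v ∈ subdiff φ z.2,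
      w = (u + (ContinuousLinearMap.adjoint D) z.2, v - D z.1)})
    {xk xt : X} {yk yt : Y} (hy : IsProx φ σ (yk + σ • D xk) yt)
    (hx : IsProx g τ (xk - τ • F xk - τ • (ContinuousLinearMap.adjoint D) ((2 : ℝ) • yt - yk)) xt) :
    P (xk, yk) - B (xk, yk) - P (xt, yt) ∈ A (xt, yt) := by
  rw [hA]
  refine ⟨_, hx.smul_sub_mem_subdiff hg_bot hg_conv hτ,
    _, hy.smul_sub_mem_subdiff hφ_bot hφ_conv hσ, ?_⟩
  rw [hP, hP, hB, Prod.mk_sub_mk, Prod.mk_sub_mk, Prod.mk.injEq]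
  constructor
  · simp only [map_sub, map_smul, smul_sub]
    match_scalars <;> field_simp
    norm_num
  · simp only [smul_sub, smul_add]
    match_scalars <;> field_simp

end PrimalDualOperator

theorem primal_dual_forward_backward_structure_general
    {X Y : Type*} [NormedAddCommGroup X] [InnerProductSpace ℝ X] [FiniteDimensional ℝ X]
    [NormedAddCommGroup Y] [InnerProductSpace ℝ Y] [FiniteDimensional ℝ Y]
    (fgrad : X → X) (g : X → EReal) (h : Y → EReal) (D : X →L[ℝ] Y)
    (hg : Gamma0 g) (hh : Gamma0 h)
    (β : ℝ) (hβ : 0 < β)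
    (hcoco : ∀ x x' : X, (1 / β) * ‖fgrad x - fgrad x'‖ ^ 2 ≤ ⟪fgrad x - fgrad x', x - x'⟫_ℝ)
    (σ τ : ℝ) (hσ : 0 < σ) (hτ : 0 < τ)
    (hstep : β / 2 < 1 / τ - σ * ‖D‖ ^ 2)
    -- the inner product on `Z = X × Y` :
    (ip : X × Y → X × Y → ℝ) (hip : ∀ z w : X × Y, ip z w = ⟪z.1, w.1⟫_ℝ + ⟪z.2, w.2⟫_ℝ)
    -- the preconditioner `P`, its inverse, and the operators `A` and `B` :
    (P Pinv : X × Y → X × Y)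
    (hP : ∀ z : X × Y, P z =
      (τ⁻¹ • z.1 + (ContinuousLinearMap.adjoint D) z.2, D z.1 + σ⁻¹ • z.2))
    (hPinv : (∀ z, P (Pinv z) = z) ∧ ∀ z, Pinv (P z) = z)
    (A : X × Y → Set (X × Y))
    (hA : ∀ z : X × Y, A z = {w | ∃ u ∈ subdiff g z.1, ∃ v ∈ subdiff (fenchel h) z.2,
      w = (u + (ContinuousLinearMap.adjoint D) z.2, v - D z.1)})
    (B : X × Y → X × Y) (hB : ∀ z : X × Y, B z = (fgrad z.1, 0))
    (κ δ : ℝ) (hκ : κ = (1 / τ - σ * ‖D‖ ^ 2) / β) (hδ : δ = 2 - 1 / (2 * κ)) :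
    -- (1) one step of the primal-dual iteration is a resolvent step
    --     `z̃^{k+1} = (I + P⁻¹A)⁻¹ (I - P⁻¹B) z^k`, i.e.
    --     `P z^k - B z^k - P z̃^{k+1} ∈ A z̃^{k+1}` :
    (∀ (xk : X) (yk : Y) (xt1 : X) (yt1 : Y),
      IsProx (fenchel h) σ (yk + σ • D xk) yt1 →
      IsProx g τ (xk - τ • fgrad xk -
        τ • (ContinuousLinearMap.adjoint D) ((2 : ℝ) • yt1 - yk)) xt1 →
      P (xk, yk) - B (xk, yk) - P (xt1, yt1) ∈ A (xt1, yt1)) ∧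
    -- (2) `T₁ = (I + P⁻¹A)⁻¹` is `1/2`-averaged in `(Z, ⟪·,·⟫_P)` :
    (∀ T₁ : X × Y → X × Y, (∀ w, P w - P (T₁ w) ∈ A (T₁ w)) →
      AveragedWrt ip P (1 / 2) T₁) ∧
    -- `T₂ = I - P⁻¹B` is `1/(2κ)`-averaged in `(Z, ⟪·,·⟫_P)` :
    AveragedWrt ip P (1 / (2 * κ)) (fun z => z - Pinv (B z)) ∧
    -- `T = T₁ ∘ T₂` is `1/δ`-averaged in `(Z, ⟪·,·⟫_P)` :
    (∀ T₁ : X × Y → X × Y, (∀ w, P w - P (T₁ w) ∈ A (T₁ w)) →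
      AveragedWrt ip P (1 / δ) (fun z => T₁ (z - Pinv (B z)))) := by
  obtain ⟨hg_proper, hg_bot, -, hg_conv⟩ := hg
  have hφ_bot := fenchel_ne_bot hh.1
  have hm : 0 < 1 / τ - σ * ‖D‖ ^ 2 := (half_pos hβ).trans hstep
  have hκ_half : 1 / 2 < κ := by rw [hκ, lt_div_iff₀ hβ]; linarith
  have hQ : ∀ u v, ip u (P v) = primalDualForm D σ τ u v := fun u v => by
    rw [hip, hP, primalDualForm_eq_inner]
  have hT₁ : ∀ T₁ : X × Y → X × Y, (∀ w, P w - P (T₁ w) ∈ A (T₁ w)) →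
      AveragedWrt ip P (1 / 2) T₁ := fun _ =>
    averagedWrt_half_of_resolvent hQ primalDualForm_isSymm (preconditioner_sub hP)
      (primalDualOperator_monotone hg_proper hg_bot hh.exists_fenchel_ne_top hφ_bot hip hA)
  have hT₂ : AveragedWrt ip P (1 / (2 * κ)) (fun z => z - Pinv (B z)) :=
    averagedWrt_sub_of_cocoercive hQ primalDualForm_isSymm (by linarith)
      (hκ ▸ primalDualForm_cocoercive hσ hβ hm.le hP hPinv.1 hB hcoco)
  refine ⟨fun _ _ _ _ hy hx => primalDual_step_mem hg_bot hg_conv hφ_bot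
    (fenchel_erealConvex hh.2.1) hσ hτ hP hB hA hy hx, hT₁, hT₂, fun T₁ hT => ?_⟩
  have hδ' : 1 / δ = (1 / 2 + 1 / (2 * κ) - 2 * (1 / 2) * (1 / (2 * κ))) /
      (1 - 1 / 2 * (1 / (2 * κ))) := by
    rw [hδ]; field_simp; ring
  rw [hδ']
  exact (hT₁ T₁ hT).comp hQ primalDualForm_isSymm (primalDualForm_nonneg hσ (by linarith)) hT₂
    (by norm_num) (by norm_num) (by positivity) (by rw [div_lt_one (by linarith)]; linarith)

theorem primal_dual_forward_backward_structure
    {X Y : Type*} [NormedAddCommGroup X] [InnerProductSpace ℝ X] [FiniteDimensional ℝ X]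
    [NormedAddCommGroup Y] [InnerProductSpace ℝ Y] [FiniteDimensional ℝ Y]
    (f : X → ℝ) (fgrad : X → X) (g : X → EReal) (h : Y → EReal) (D : X →L[ℝ] Y)
    (hf_conv : ConvexOn ℝ Set.univ f)
    (hf_grad : ∀ x, HasGradientAt f (fgrad x) x)
    (hg : Gamma0 g) (hh : Gamma0 h)
    (β : ℝ) (hβ : 0 < β)
    (hcoco : ∀ x x' : X, (1 / β) * ‖fgrad x - fgrad x'‖ ^ 2 ≤ ⟪fgrad x - fgrad x', x - x'⟫_ℝ)
    (σ τ : ℝ) (hσ : 0 < σ) (hτ : 0 < τ)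
    (hstep : β / 2 < 1 / τ - σ * ‖D‖ ^ 2)
    -- the inner product on `Z = X × Y` :
    (ip : X × Y → X × Y → ℝ) (hip : ∀ z w : X × Y, ip z w = ⟪z.1, w.1⟫_ℝ + ⟪z.2, w.2⟫_ℝ)
    -- the preconditioner `P`, its inverse, and the operators `A` and `B` :
    (P Pinv : X × Y → X × Y)
    (hP : ∀ z : X × Y, P z =
      (τ⁻¹ • z.1 + (ContinuousLinearMap.adjoint D) z.2, D z.1 + σ⁻¹ • z.2))
    (hPinv : (∀ z, P (Pinv z) = z) ∧ ∀ z, Pinv (P z) = z)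
    (A : X × Y → Set (X × Y))
    (hA : ∀ z : X × Y, A z = {w | ∃ u ∈ subdiff g z.1, ∃ v ∈ subdiff (fenchel h) z.2,
      w = (u + (ContinuousLinearMap.adjoint D) z.2, v - D z.1)})
    (B : X × Y → X × Y) (hB : ∀ z : X × Y, B z = (fgrad z.1, 0))
    (κ δ : ℝ) (hκ : κ = (1 / τ - σ * ‖D‖ ^ 2) / β) (hδ : δ = 2 - 1 / (2 * κ)) :
    -- (1) one step of the primal-dual iteration is a resolvent step
    --     `z̃^{k+1} = (I + P⁻¹A)⁻¹ (I - P⁻¹B) z^k`, i.e.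
    --     `P z^k - B z^k - P z̃^{k+1} ∈ A z̃^{k+1}` :
    (∀ (xk : X) (yk : Y) (xt1 : X) (yt1 : Y),
      IsProx (fenchel h) σ (yk + σ • D xk) yt1 →
      IsProx g τ (xk - τ • fgrad xk -
        τ • (ContinuousLinearMap.adjoint D) ((2 : ℝ) • yt1 - yk)) xt1 →
      P (xk, yk) - B (xk, yk) - P (xt1, yt1) ∈ A (xt1, yt1)) ∧
    -- (2) `T₁ = (I + P⁻¹A)⁻¹` is `1/2`-averaged in `(Z, ⟪·,·⟫_P)` :
    (∀ T₁ : X × Y → X × Y, (∀ w, P w - P (T₁ w) ∈ A (T₁ w)) →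
      AveragedWrt ip P (1 / 2) T₁) ∧
    -- `T₂ = I - P⁻¹B` is `1/(2κ)`-averaged in `(Z, ⟪·,·⟫_P)` :
    AveragedWrt ip P (1 / (2 * κ)) (fun z => z - Pinv (B z)) ∧
    -- `T = T₁ ∘ T₂` is `1/δ`-averaged in `(Z, ⟪·,·⟫_P)` :
    (∀ T₁ : X × Y → X × Y, (∀ w, P w - P (T₁ w) ∈ A (T₁ w)) →
      AveragedWrt ip P (1 / δ) (fun z => T₁ (z - Pinv (B z)))) :=
  primal_dual_forward_backward_structure_general fgrad g h D hg hh β hβ hcoco σ τ hσ hτ hstep ip hip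
    P Pinv hP hPinv A hA B hB κ δ hκ hδ
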